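/- arXiv:2211.07410 — 4 statements merged into one kernel-verified Lean document; each statement's English description precedes it below -/
import Mathlib

section
/- Let H_A, H_B, H_I be Hermitian operators on a finite-dimensional tensor-product Hilbert space H_A⊗H_B, with H_A, H_B acting on their respective factors, satisfying [H_I, H_A + H_B] = 0. Let H = H_A + H_B + H_I, ρ a density matrix, ρ(t) = e^{−iHt} ρ e^{iHt}, and Q(t) = tr[(ρ(t) − ρ)H_B]. Define iterated commutators [H_I, H_B]_1 = [H_I, H_B] and [H_I, H_B]_n = [H_I, [H_I, H_B]_{n−1}]. Then for every n ≥ 1 and every t, the n-th time derivative of Q satisfies d^nQ/dt^n (t) = i^n tr( ρ(t) [H_I, H_B]_n ). -/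
/-!
`H₀ = H_A ⊗ 1 + 1 ⊗ H_B` commutes with `H_I` by hypothesis and with `1 ⊗ H_B` because `H_A ⊗ 1`
and `1 ⊗ H_B` act on different tensor factors, hence with every `[H_I, H_B]_k`; so
`[H, [H_I, H_B]_k] = [H_I, H_B]_{k+1}`, i.e. the iterated commutators with `H = H₀ + H_I` and
with `H_I` agree. The Liouville–von Neumann equation and cyclicity of the trace give
`d/dt tr(ρ(t) X) = i tr(ρ(t) [H, X])`, so the `n`-th derivative of `tr(ρ(t) H_B)` is
`iⁿ tr(ρ(t) [H, H_B]_n)`; the constant `tr(ρ H_B)` in `Q` disappears after one differentiation.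
-/

open Matrix Kronecker Complex
open scoped ComplexOrder

noncomputable section

def evolve {n : Type*} [Fintype n] [DecidableEq n] (H ρ : Matrix n n ℂ) (t : ℝ) :
    Matrix n n ℂ :=
  NormedSpace.exp ((-(I * t)) • H) * ρ * NormedSpace.exp ((I * t) • H)

/-- The paper's `[X, Y]_n`, extended by `[X, Y]_0 = Y`. -/
def itComm {n : Type*} [Fintype n] (X Y : Matrix n n ℂ) : ℕ → Matrix n n ℂ
  | 0 => Y
  | k + 1 => ⁅X, itComm X Y k⁆

lemma commute_kronecker_one_one_kronecker {R m n : Type*} [CommSemiring R] [Fintype m]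
    [DecidableEq m] [Fintype n] [DecidableEq n] (A : Matrix m m R) (B : Matrix n n R) :
    Commute (A ⊗ₖ (1 : Matrix n n R)) ((1 : Matrix m m R) ⊗ₖ B) := by
  simp only [Commute, SemiconjBy, ← mul_kronecker_mul, mul_one, one_mul]

section

variable {N : Type*} [Fintype N]

lemma commute_itComm {H₀ X Y : Matrix N N ℂ} (hX : Commute H₀ X) (hY : Commute H₀ Y) :
    ∀ k, Commute H₀ (itComm X Y k)
  | 0 => hY
  | k + 1 =>
    have hk := commute_itComm hX hY k
    (hX.mul_right hk).sub_right (hk.mul_right hX)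

lemma itComm_add_of_commute {H₀ X Y : Matrix N N ℂ} (hX : Commute H₀ X) (hY : Commute H₀ Y) :
    ∀ k, itComm (H₀ + X) Y k = itComm X Y k
  | 0 => rfl
  | k + 1 => by
    rw [itComm, itComm_add_of_commute hX hY k, itComm, Ring.lie_def, Ring.lie_def, add_mul, mul_add,
      (commute_itComm hX hY k).eq]
    abel

lemma trace_lie_mul {R : Type*} [CommRing R] (A B C : Matrix N N R) :
    (⁅A, B⁆ * C).trace = (A * ⁅B, C⁆).trace := by
  simp only [Ring.lie_def, sub_mul, mul_sub, trace_sub, mul_assoc]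
  rw [trace_mul_comm B (A * C), mul_assoc]

variable [DecidableEq N]

-- Any algebra norm would do: all norms on matrices induce the same topology.
attribute [local instance] Matrix.linftyOpNormedRing Matrix.linftyOpNormedAlgebra

lemma hasDerivAt_evolve (H ρ : Matrix N N ℂ) (t : ℝ) :
    HasDerivAt (evolve H ρ) (I • ⁅evolve H ρ t, H⁆) t := by
  have hc (c : ℂ) : HasDerivAt (fun s : ℝ => c * s) c t := by
    simpa using (hasDerivAt_id t).ofReal_comp.const_mul c
  have hE := (hasDerivAt_exp_smul_const' (𝕂 := ℂ) H (-I * t)).scomp t (hc (-I))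
  have hF := (hasDerivAt_exp_smul_const (𝕂 := ℂ) H (I * t)).scomp t (hc I)
  simp only [neg_mul] at hE
  refine ((hE.mul_const ρ).mul hF).congr_deriv ?_
  simp only [evolve, Function.comp_apply, Ring.lie_def, smul_sub, neg_smul, neg_mul,
    smul_mul_assoc, mul_smul_comm, mul_assoc]
  exact add_comm _ _

lemma hasDerivAt_trace_evolve_mul (H ρ X : Matrix N N ℂ) (t : ℝ) :
    HasDerivAt (fun s => (evolve H ρ s * X).trace) (I * (evolve H ρ t * ⁅H, X⁆).trace) t := by
  have := ((traceLinearMap N ℂ ℂ).toContinuousLinearMap.restrictScalars ℝ).hasFDerivAt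
    |>.comp_hasDerivAt t ((hasDerivAt_evolve H ρ t).mul_const X)
  refine this.congr_deriv ?_
  change (I • ⁅evolve H ρ t, H⁆ * X).trace = _
  rw [Matrix.smul_mul, trace_smul, trace_lie_mul, smul_eq_mul]

lemma iteratedDeriv_trace_evolve_mul (H ρ X : Matrix N N ℂ) (k : ℕ) :
    iteratedDeriv k (fun s => (evolve H ρ s * X).trace)
      = fun t => I ^ k * (evolve H ρ t * itComm H X k).trace := by
  induction k with
  | zero => simp [itComm]
  | succ k ih =>
    ext t
    rw [iteratedDeriv_succ, ih, ((hasDerivAt_trace_evolve_mul H ρ _ t).const_mul (I ^ k)).deriv,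
      itComm, pow_succ, mul_assoc]

end

theorem heat_transfer_nth_derivative_general
    {m n : Type*} [Fintype m] [DecidableEq m] [Fintype n] [DecidableEq n]
    (HA : Matrix m m ℂ) (HB : Matrix n n ℂ) (HI : Matrix (m × n) (m × n) ℂ)
    (hcomm : ⁅HI, HA ⊗ₖ (1 : Matrix n n ℂ) + (1 : Matrix m m ℂ) ⊗ₖ HB⁆ = 0)
    (ρ : Matrix (m × n) (m × n) ℂ)
    (H : Matrix (m × n) (m × n) ℂ)
    (hH : H = HA ⊗ₖ (1 : Matrix n n ℂ) + (1 : Matrix m m ℂ) ⊗ₖ HB + HI)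
    (Q : ℝ → ℂ)
    (hQ : Q = fun t => ((evolve H ρ t - ρ) * ((1 : Matrix m m ℂ) ⊗ₖ HB)).trace) :
    ∀ k : ℕ, 1 ≤ k → ∀ t : ℝ,
      iteratedDeriv k Q t
        = I ^ k * (evolve H ρ t * itComm HI ((1 : Matrix m m ℂ) ⊗ₖ HB) k).trace := by
  intro k hk t
  obtain ⟨j, rfl⟩ : ∃ j, k = j + 1 := ⟨k - 1, by omega⟩
  have hderiv_Q : deriv Q = deriv fun s => (evolve H ρ s * (1 ⊗ₖ HB)).trace := by
    funext s
    simp only [hQ, Matrix.sub_mul, trace_sub, deriv_sub_const]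
  have hHI : Commute (HA ⊗ₖ 1 + 1 ⊗ₖ HB) HI := (commute_iff_lie_eq.mpr hcomm).symm
  have hHB : Commute (HA ⊗ₖ 1 + 1 ⊗ₖ HB) ((1 : Matrix m m ℂ) ⊗ₖ HB) :=
    (commute_kronecker_one_one_kronecker HA HB).add_left (Commute.refl _)
  rw [iteratedDeriv_succ', hderiv_Q, ← iteratedDeriv_succ', iteratedDeriv_trace_evolve_mul, hH,
    itComm_add_of_commute hHI hHB]

/-- Under the heat-transfer condition `[H_I, H_A + H_B] = 0`, for the heat
transfer `Q(t) = tr[(ρ(t) - ρ)H_B]` with `ρ(t) = e^{-iHt} ρ e^{iHt}`, the `n`-th time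
derivative is `dⁿQ/dtⁿ(t) = iⁿ tr(ρ(t) [H_I, H_B]_n)` for every `n ≥ 1` and every `t`. -/
theorem heat_transfer_nth_derivative
    {m n : Type*} [Fintype m] [DecidableEq m] [Fintype n] [DecidableEq n]
    (HA : Matrix m m ℂ) (HB : Matrix n n ℂ) (HI : Matrix (m × n) (m × n) ℂ)
    (hHA : HA.IsHermitian) (hHB : HB.IsHermitian) (hHI : HI.IsHermitian)
    (hcomm : ⁅HI, HA ⊗ₖ (1 : Matrix n n ℂ) + (1 : Matrix m m ℂ) ⊗ₖ HB⁆ = 0)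
    (ρ : Matrix (m × n) (m × n) ℂ) (hρ : ρ.PosSemidef) (hρtr : ρ.trace = 1)
    (H : Matrix (m × n) (m × n) ℂ)
    (hH : H = HA ⊗ₖ (1 : Matrix n n ℂ) + (1 : Matrix m m ℂ) ⊗ₖ HB + HI)
    (Q : ℝ → ℂ)
    (hQ : Q = fun t => ((evolve H ρ t - ρ) * ((1 : Matrix m m ℂ) ⊗ₖ HB)).trace) :
    ∀ k : ℕ, 1 ≤ k → ∀ t : ℝ,
      iteratedDeriv k Q t
        = I ^ k * (evolve H ρ t * itComm HI ((1 : Matrix m m ℂ) ⊗ₖ HB) k).trace :=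
  heat_transfer_nth_derivative_general HA HB HI hcomm ρ H hH Q hQ
end
end

section
/- Frequency-matching condition. With qubits indexed by a finite set, frequencies ω_u ≥ 0, H_0 = −(1/2) Σ_u ω_u σ^z_u, and an interaction H_I = Σ c_{S_+,S_−,S_z} Ξ_{S_+,S_−,S_z} written as a complex linear combination over configurations (S_+, S_−, S_z) of pairwise disjoint subsets, where Ξ_{S_+,S_−,S_z} = (Π_{u∈S_+}σ^+_u)(Π_{v∈S_−}σ^−_v)(Π_{w∈S_z}σ^z_w): if [H_0, H_I] = 0 then for every configuration, either c_{S_+,S_−,S_z} = 0 or Σ_{u∈S_+} ω_u = Σ_{v∈S_−} ω_v. -/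
open Matrix Kronecker Complex

noncomputable section

/-- Pauli X. -/
def σx : Matrix (Fin 2) (Fin 2) ℂ := !![0, 1; 1, 0]
/-- Pauli Y. -/
def σy : Matrix (Fin 2) (Fin 2) ℂ := !![0, -I; I, 0]
/-- Pauli Z. -/
def σz : Matrix (Fin 2) (Fin 2) ℂ := !![1, 0; 0, -1]
/-- Raising operator `σ⁺ = (σˣ + iσʸ)/2`. -/
def σp : Matrix (Fin 2) (Fin 2) ℂ := !![0, 1; 0, 0]
/-- Lowering operator `σ⁻ = (σˣ - iσʸ)/2`. -/
def σm : Matrix (Fin 2) (Fin 2) ℂ := !![0, 0; 1, 0]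

/-- Tensor product of a family of single-qubit operators, as a matrix on `⊗_{i : ι} ℂ²`. -/
def tpow {ι : Type*} [Fintype ι] (M : ι → Matrix (Fin 2) (Fin 2) ℂ) :
    Matrix (ι → Fin 2) (ι → Fin 2) ℂ :=
  Matrix.of fun f g => ∏ i, M i (f i) (g i)

/-- The single-qubit operator `M` acting on qubit `u`, tensored with the identity elsewhere. -/
def opAt {ι : Type*} [Fintype ι] [DecidableEq ι] (u : ι) (M : Matrix (Fin 2) (Fin 2) ℂ) :
    Matrix (ι → Fin 2) (ι → Fin 2) ℂ :=
  tpow fun i => if i = u then M else 1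

/-- The single-qubit Gibbs state `e^{βωσᶻ/2}/(2cosh(βω/2))` of the Hamiltonian `-(ω/2)σᶻ`
at inverse temperature `β`. -/
def gibbsQubit (β ω : ℝ) : Matrix (Fin 2) (Fin 2) ℂ :=
  ((2 * Real.cosh (β * ω / 2) : ℝ) : ℂ)⁻¹ •
    !![(Real.exp (β * ω / 2) : ℂ), 0; 0, (Real.exp (-(β * ω) / 2) : ℂ)]

/-- Reduced density matrix of a multi-qubit state on the single qubit `u`
(partial trace over all other qubits). -/
def rdm1 {ι : Type*} [Fintype ι] [DecidableEq ι] (u : ι)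
    (ρ : Matrix (ι → Fin 2) (ι → Fin 2) ℂ) : Matrix (Fin 2) (Fin 2) ℂ :=
  Matrix.of fun a b => ∑ g : ι → Fin 2, if g u = a then ρ g (Function.update g u b) else 0

/-- Reduced density matrix of a multi-qubit state on the (distinct) pair of qubits `u, v`
(partial trace over all other qubits). -/
def rdm2 {ι : Type*} [Fintype ι] [DecidableEq ι] (u v : ι)
    (ρ : Matrix (ι → Fin 2) (ι → Fin 2) ℂ) : Matrix (Fin 2 × Fin 2) (Fin 2 × Fin 2) ℂ :=
  Matrix.of fun p q => ∑ g : ι → Fin 2,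
    if g u = p.1 ∧ g v = p.2 then
      ρ g (Function.update (Function.update g u q.1) v q.2) else 0

/-- Reduced density matrix of a multi-qubit state on the (distinct) triple of qubits `u, v, w`
(partial trace over all other qubits). -/
def rdm3 {ι : Type*} [Fintype ι] [DecidableEq ι] (u v w : ι)
    (ρ : Matrix (ι → Fin 2) (ι → Fin 2) ℂ) :
    Matrix ((Fin 2 × Fin 2) × Fin 2) ((Fin 2 × Fin 2) × Fin 2) ℂ :=
  Matrix.of fun p q => ∑ g : ι → Fin 2,
    if g u = p.1.1 ∧ g v = p.1.2 ∧ g w = p.2 then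
      ρ g (Function.update (Function.update (Function.update g u q.1.1) v q.1.2) w q.2) else 0

/-!
Each `σ⁺`, `σ⁻` is an eigen-operator of `ad σᶻ` with eigenvalue `±2`, while `1` and `σᶻ`
commute with `σᶻ`; tensoring, `Ξ_{S₊,S₋,S_z}` is an eigen-operator of `ad H₀` with eigenvalue
`Σ_{S₋} ω - Σ_{S₊} ω`. Hence `[H₀, H_I] = Σ c λ Ξ`, and since the `Ξ` are pairwise orthogonal for
the Hilbert–Schmidt pairing `tr (Xᴴ Y)`, hence linearly independent, every `c λ` vanishes.
-/

open Finset

section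

attribute [local instance] LieRing.ofAssociativeRing

theorem coeff_mul_eq_zero_of_lie_sum_eq_zero {R L M κ : Type*} [CommRing R] [LieRing L]
    [LieAlgebra R L] [AddCommGroup M] [Module R M] [LieRingModule L M] [LieModule R L M]
    [Fintype κ] {X : κ → M} (hX : LinearIndependent R X) {H : L} {μ : κ → R}
    (hμ : ∀ g, ⁅H, X g⁆ = μ g • X g) (c : κ → R) (h : ⁅H, ∑ g, c g • X g⁆ = 0) (g : κ) :
    c g * μ g = 0 := by
  simp only [lie_sum, lie_smul, hμ, smul_smul] at h
  exact Fintype.linearIndependent_iff.1 hX _ h g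

section TensorPower

variable {ι : Type*} [Fintype ι]

theorem conjTranspose_tpow (A : ι → Matrix (Fin 2) (Fin 2) ℂ) :
    (tpow A)ᴴ = tpow fun i => (A i)ᴴ := by
  ext x y
  exact star_prod _ _

variable [DecidableEq ι]

theorem tpow_mul (A B : ι → Matrix (Fin 2) (Fin 2) ℂ) :
    tpow A * tpow B = tpow fun i => A i * B i := by
  ext x y
  simp only [tpow, Matrix.mul_apply, Matrix.of_apply, ← prod_mul_distrib]
  rw [Fintype.prod_sum fun i k => A i (x i) k * B i k (y i)]

theorem trace_tpow (A : ι → Matrix (Fin 2) (Fin 2) ℂ) :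
    (tpow A).trace = ∏ i, (A i).trace :=
  (Fintype.prod_sum fun i k => A i k k).symm

theorem trace_conjTranspose_tpow_mul_tpow (A B : ι → Matrix (Fin 2) (Fin 2) ℂ) :
    ((tpow A)ᴴ * tpow B).trace = ∏ i, ((A i)ᴴ * B i).trace := by
  rw [conjTranspose_tpow, tpow_mul, trace_tpow]

theorem linearIndependent_tpow {α : Type*} (M : α → Matrix (Fin 2) (Fin 2) ℂ)
    (h_orth : ∀ a b, a ≠ b → ((M a)ᴴ * M b).trace = 0)
    (h_norm : ∀ a, ((M a)ᴴ * M a).trace ≠ 0) :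
    LinearIndependent ℂ fun g : ι → α => tpow fun i => M (g i) := by
  classical
  have pairing (f g : ι → α) :
      ((tpow fun i => M (f i))ᴴ * tpow fun i => M (g i)).trace
        = if f = g then ∏ i, ((M (f i))ᴴ * M (f i)).trace else 0 := by
    rw [trace_conjTranspose_tpow_mul_tpow]
    split_ifs with hfg
    · rw [hfg]
    · obtain ⟨i, hi⟩ := Function.ne_iff.1 hfg
      exact prod_eq_zero (mem_univ i) (h_orth _ _ hi)
  rw [linearIndependent_iff']
  intro s c hsum f hf
  have h := congrArg (fun X => ((tpow fun i => M (f i))ᴴ * X).trace) hsum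
  simp only [Matrix.mul_sum, Matrix.mul_smul, Matrix.trace_sum, Matrix.trace_smul, pairing,
    smul_eq_mul, mul_ite, mul_zero, sum_ite_eq, if_pos hf, Matrix.trace_zero] at h
  exact (mul_eq_zero.1 h).resolve_right (prod_ne_zero_iff.2 fun i _ => h_norm _)

theorem tpow_update_apply (M : ι → Matrix (Fin 2) (Fin 2) ℂ) (u : ι)
    (X : Matrix (Fin 2) (Fin 2) ℂ) (x y : ι → Fin 2) :
    tpow (Function.update M u X) x y = X (x u) (y u) * ∏ i ∈ univ.erase u, M i (x i) (y i) := by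
  rw [tpow, Matrix.of_apply, ← mul_prod_erase _ _ (mem_univ u), Function.update_self]
  congr 1
  exact prod_congr rfl fun i hi => by rw [Function.update_of_ne (ne_of_mem_erase hi)]

theorem opAt_mul_tpow (u : ι) (A : Matrix (Fin 2) (Fin 2) ℂ) (M : ι → Matrix (Fin 2) (Fin 2) ℂ) :
    opAt u A * tpow M = tpow (Function.update M u (A * M u)) := by
  rw [opAt, tpow_mul]
  congr 1
  ext1 i
  by_cases hi : i = u <;> simp [hi]

theorem tpow_mul_opAt (u : ι) (A : Matrix (Fin 2) (Fin 2) ℂ) (M : ι → Matrix (Fin 2) (Fin 2) ℂ) :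
    tpow M * opAt u A = tpow (Function.update M u (M u * A)) := by
  rw [opAt, tpow_mul]
  congr 1
  ext1 i
  by_cases hi : i = u <;> simp [hi]

theorem lie_opAt_tpow (u : ι) (A : Matrix (Fin 2) (Fin 2) ℂ) (M : ι → Matrix (Fin 2) (Fin 2) ℂ)
    {d : ℂ} (h : ⁅A, M u⁆ = d • M u) : ⁅opAt u A, tpow M⁆ = d • tpow M := by
  ext x y
  conv_rhs => rw [← Function.update_eq_self u M]
  rw [Ring.lie_def, Matrix.sub_apply, opAt_mul_tpow, tpow_mul_opAt, tpow_update_apply,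
    tpow_update_apply, Matrix.smul_apply, tpow_update_apply, ← sub_mul, ← Matrix.sub_apply,
    ← Ring.lie_def, h, Matrix.smul_apply, smul_eq_mul, smul_eq_mul, mul_assoc]

theorem lie_sum_opAt_tpow {α : Type*} (A : Matrix (Fin 2) (Fin 2) ℂ)
    (M : α → Matrix (Fin 2) (Fin 2) ℂ) (d : α → ℂ) (h : ∀ a, ⁅A, M a⁆ = d a • M a)
    (ω : ι → ℂ) (g : ι → α) :
    ⁅∑ u, ω u • opAt u A, tpow fun i => M (g i)⁆
      = (∑ u, ω u * d (g u)) • tpow fun i => M (g i) := by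
  rw [sum_lie, Finset.sum_smul]
  refine sum_congr rfl fun u _ => ?_
  rw [smul_lie, lie_opAt_tpow u A _ (h (g u)), smul_smul]

end TensorPower

section PauliLadder

def pauliLadder : Fin 4 → Matrix (Fin 2) (Fin 2) ℂ := ![1, σp, σm, σz]

def ladderWeight : Fin 4 → ℂ := ![0, 2, -2, 0]

theorem lie_σz_pauliLadder (a : Fin 4) :
    ⁅σz, pauliLadder a⁆ = ladderWeight a • pauliLadder a := by
  rw [Ring.lie_def]
  fin_cases a <;> ext i j <;> fin_cases i <;> fin_cases j <;>
    simp [pauliLadder, ladderWeight, σp, σm, σz] <;> norm_num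

theorem trace_conjTranspose_pauliLadder_mul_of_ne {a b : Fin 4} (hab : a ≠ b) :
    ((pauliLadder a)ᴴ * pauliLadder b).trace = 0 := by
  fin_cases a <;> fin_cases b <;>
    simp_all [pauliLadder, σp, σm, σz, Matrix.trace_fin_two, Matrix.mul_apply, Fin.sum_univ_two]

theorem trace_conjTranspose_pauliLadder_mul_self_ne_zero (a : Fin 4) :
    ((pauliLadder a)ᴴ * pauliLadder a).trace ≠ 0 := by
  fin_cases a <;>
    simp [pauliLadder, σp, σm, σz, Matrix.trace_fin_two, Matrix.mul_apply, Fin.sum_univ_two]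

theorem sum_mul_ladderWeight {ι : Type*} [Fintype ι] (ω : ι → ℝ) (g : ι → Fin 4) :
    ∑ u, (ω u : ℂ) * ladderWeight (g u)
      = 2 * (((∑ u ∈ univ.filter (fun u => g u = 1), ω u : ℝ) : ℂ)
        - ((∑ v ∈ univ.filter (fun v => g v = 2), ω v : ℝ) : ℂ)) := by
  have hw (a : Fin 4) :
      ladderWeight a = 2 * ((if a = 1 then 1 else 0) - (if a = 2 then 1 else 0)) := by
    fin_cases a <;> simp [ladderWeight]
  simp only [hw, mul_sub, mul_ite, mul_one, mul_zero, sum_sub_distrib, ← sum_filter]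
  push_cast
  rw [← sum_mul, ← sum_mul]
  ring

theorem pauliLadder_coeff_mul_eigenvalue_eq_zero {ι : Type*} [Fintype ι] [DecidableEq ι]
    (ω : ι → ℝ) (c : (ι → Fin 4) → ℂ)
    (hcomm : ⁅(-(1/2) : ℂ) • ∑ u, (ω u : ℂ) • opAt u σz,
      ∑ g, c g • tpow fun i => pauliLadder (g i)⁆ = 0) (g : ι → Fin 4) :
    c g * (-(1/2) * ∑ u, (ω u : ℂ) * ladderWeight (g u)) = 0 := by
  have h_eigen (g : ι → Fin 4) : ⁅(-(1/2) : ℂ) • ∑ u, (ω u : ℂ) • opAt u σz,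
      tpow fun i => pauliLadder (g i)⁆
        = (-(1/2) * ∑ u, (ω u : ℂ) * ladderWeight (g u)) • tpow fun i => pauliLadder (g i) := by
    rw [smul_lie, lie_sum_opAt_tpow _ _ _ lie_σz_pauliLadder, smul_smul]
  exact coeff_mul_eq_zero_of_lie_sum_eq_zero (linearIndependent_tpow pauliLadder
    (fun _ _ => trace_conjTranspose_pauliLadder_mul_of_ne)
    trace_conjTranspose_pauliLadder_mul_self_ne_zero) h_eigen c hcomm g

end PauliLadder

end

theorem frequency_matching_condition_general {ι : Type*} [Fintype ι] [DecidableEq ι]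
    (ω : ι → ℝ)
    (c : (ι → Fin 4) → ℂ)
    (H₀ : Matrix (ι → Fin 2) (ι → Fin 2) ℂ)
    (hH₀ : H₀ = (-(1/2) : ℂ) • ∑ u, (ω u : ℂ) • opAt u σz)
    (HI : Matrix (ι → Fin 2) (ι → Fin 2) ℂ)
    (hHI : HI = ∑ f : ι → Fin 4,
      c f • tpow fun i => ![(1 : Matrix (Fin 2) (Fin 2) ℂ), σp, σm, σz] (f i))
    (hcomm : ⁅H₀, HI⁆ = 0) :
    ∀ f : ι → Fin 4, c f = 0 ∨
      ∑ u ∈ Finset.univ.filter (fun u => f u = 1), ω u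
        = ∑ v ∈ Finset.univ.filter (fun v => f v = 2), ω v := by
  subst hH₀ hHI
  intro f
  have h_coeff := pauliLadder_coeff_mul_eigenvalue_eq_zero ω c hcomm f
  rw [sum_mul_ladderWeight] at h_coeff
  refine (mul_eq_zero.1 h_coeff).imp_right fun h_freq => ?_
  have h_diff : ((∑ u ∈ univ.filter (fun u => f u = 1), ω u : ℝ) : ℂ)
      - ((∑ v ∈ univ.filter (fun v => f v = 2), ω v : ℝ) : ℂ) = 0 := by
    linear_combination -h_freq
  exact_mod_cast sub_eq_zero.1 h_diff

/-- **frequency-matching condition.** Encode a configuration of pairwise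
disjoint subsets `(S₊, S₋, S_z)` of qubits as a function `f : ι → Fin 4` assigning to each
qubit `1`/`2`/`3` according as it lies in `S₊`/`S₋`/`S_z` (and `0` otherwise), with
`Ξ_f = ⊗_i M(f i)`, `M = (I, σ⁺, σ⁻, σᶻ)`. If `H₀ = -(1/2) Σ_u ω_u σᶻ_u` (`ω_u ≥ 0`) and
`H_I = Σ_f c_f Ξ_f` satisfy `[H₀, H_I] = 0`, then for every configuration `f` either
`c_f = 0` or `Σ_{u∈S₊} ω_u = Σ_{v∈S₋} ω_v`. -/
theorem frequency_matching_condition {ι : Type*} [Fintype ι] [DecidableEq ι]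
    (ω : ι → ℝ) (hω : ∀ u, 0 ≤ ω u)
    (c : (ι → Fin 4) → ℂ)
    (H₀ : Matrix (ι → Fin 2) (ι → Fin 2) ℂ)
    (hH₀ : H₀ = (-(1/2) : ℂ) • ∑ u, (ω u : ℂ) • opAt u σz)
    (HI : Matrix (ι → Fin 2) (ι → Fin 2) ℂ)
    (hHI : HI = ∑ f : ι → Fin 4,
      c f • tpow fun i => ![(1 : Matrix (Fin 2) (Fin 2) ℂ), σp, σm, σz] (f i))
    (hcomm : ⁅H₀, HI⁆ = 0) :
    ∀ f : ι → Fin 4, c f = 0 ∨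
      ∑ u ∈ Finset.univ.filter (fun u => f u = 1), ω u
        = ∑ v ∈ Finset.univ.filter (fun v => f v = 2), ω v :=
  frequency_matching_condition_general ω c H₀ hH₀ HI hHI hcomm
end
end

section
/- Characterization of two-body heat-transfer interactions for a qubit pair. Let A and B be two qubits with frequencies ω_A, ω_B > 0, H_0 = −(ω_A/2)σ^z⊗I − (ω_B/2)I⊗σ^z, and H_I = Σ_{a,b∈{x,y,z}} c^{ab} σ^a⊗σ^b with real coefficients c^{ab}. Then [H_0, H_I] = 0 if and only if: c^{xz} = c^{yz} = c^{zx} = c^{zy} = 0, and either (i) ω_A ≠ ω_B and c^{xx} = c^{xy} = c^{yx} = c^{yy} = 0, or (ii) ω_A = ω_B and c^{xx} = c^{yy}, c^{xy} = −c^{yx} (c^{zz} is unconstrained in both cases). Equivalently, a frequency-matched commuting two-body interaction is of the flip-flop form c σ^−⊗σ^+ + c̄ σ^+⊗σ^− plus a σ^z⊗σ^z term. -/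
open Matrix Kronecker Complex

noncomputable section

/-!
In the product basis `H₀` is diagonal with the energies `bareEnergy`, so `[H₀, H_I] = 0` exactly
when `H_I` has no matrix element between levels of different energy. The elements
`⟨00|H_I|01⟩ = c^{zx} - i c^{zy}`, `⟨00|H_I|10⟩ = c^{xz} - i c^{yz}` and
`⟨00|H_I|11⟩ = (c^{xx} - c^{yy}) - i (c^{xy} + c^{yx})` join levels split by `ω_B`, `ω_A` and
`ω_A + ω_B`, so they always vanish, while
`⟨01|H_I|10⟩ = (c^{xx} + c^{yy}) - i (c^{yx} - c^{xy})` joins levels split by `ω_A - ω_B`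
and is forced to vanish only off resonance. All other off-diagonal elements agree with these up to
sign and complex conjugation.
-/

theorem Matrix.lie_diagonal_apply {n R : Type*} [Fintype n] [DecidableEq n] [CommRing R]
    (d : n → R) (M : Matrix n n R) (p q : n) :
    ⁅diagonal d, M⁆ p q = (d p - d q) * M p q := by
  rw [Ring.lie_def, sub_apply, diagonal_mul, mul_diagonal]
  ring

theorem Matrix.lie_diagonal_eq_zero_iff {n R : Type*} [Fintype n] [DecidableEq n] [CommRing R]
    [NoZeroDivisors R] (d : n → R) (M : Matrix n n R) :
    ⁅diagonal d, M⁆ = 0 ↔ ∀ p q, d p ≠ d q → M p q = 0 := by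
  simp only [← Matrix.ext_iff, lie_diagonal_apply, zero_apply, mul_eq_zero, sub_eq_zero]
  exact forall₂_congr fun _ _ => or_iff_not_imp_left

theorem Complex.ofReal_sub_ofReal_mul_I_eq_zero {x y : ℝ} :
    (x : ℂ) - y * I = 0 ↔ x = 0 ∧ y = 0 := by
  simp [Complex.ext_iff]

theorem σz_eq_diagonal : σz = diagonal ![1, -1] := by
  ext i j
  fin_cases i <;> fin_cases j <;> rfl

/-- Energy of the product basis state `|p.1 p.2⟩` under `H₀`, where index `0` is spin up. -/
def bareEnergy (ωA ωB : ℝ) (p : Fin 2 × Fin 2) : ℝ :=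
  -(ωA * ![1, -1] p.1 + ωB * ![1, -1] p.2) / 2

theorem bareHamiltonian_eq_diagonal (ωA ωB : ℝ) :
    ((-(ωA/2) : ℝ) : ℂ) • (σz ⊗ₖ (1 : Matrix (Fin 2) (Fin 2) ℂ))
        + ((-(ωB/2) : ℝ) : ℂ) • ((1 : Matrix (Fin 2) (Fin 2) ℂ) ⊗ₖ σz) =
      diagonal fun p => (bareEnergy ωA ωB p : ℂ) := by
  rw [σz_eq_diagonal, ← diagonal_one, diagonal_kronecker_diagonal, diagonal_kronecker_diagonal,
    ← diagonal_smul, ← diagonal_smul, diagonal_add]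
  congr 1
  ext ⟨i, j⟩
  fin_cases i <;> fin_cases j <;> norm_num [bareEnergy] <;> ring

def pauliInteraction (c : Fin 3 → Fin 3 → ℝ) : Matrix (Fin 2 × Fin 2) (Fin 2 × Fin 2) ℂ :=
  ∑ a, ∑ b, ((c a b : ℝ) : ℂ) • (![σx, σy, σz] a ⊗ₖ ![σx, σy, σz] b)

theorem pauliInteraction_apply (c : Fin 3 → Fin 3 → ℝ) (i j k l : Fin 2) :
    pauliInteraction c (i, j) (k, l) =
      ∑ a, ∑ b, (c a b : ℂ) * ![σx, σy, σz] a i k * ![σx, σy, σz] b j l := by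
  simp [pauliInteraction, Matrix.sum_apply, mul_assoc]

theorem pauliInteraction_apply_zero_zero_zero_one (c : Fin 3 → Fin 3 → ℝ) :
    pauliInteraction c (0, 0) (0, 1) = (c 2 0 : ℂ) - (c 2 1 : ℂ) * I := by
  simp [pauliInteraction_apply, Fin.sum_univ_three, σx, σy, σz, sub_eq_add_neg]

theorem pauliInteraction_apply_zero_zero_one_zero (c : Fin 3 → Fin 3 → ℝ) :
    pauliInteraction c (0, 0) (1, 0) = (c 0 2 : ℂ) - (c 1 2 : ℂ) * I := by
  simp [pauliInteraction_apply, Fin.sum_univ_three, σx, σy, σz, sub_eq_add_neg]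

theorem pauliInteraction_apply_zero_zero_one_one (c : Fin 3 → Fin 3 → ℝ) :
    pauliInteraction c (0, 0) (1, 1) =
      ((c 0 0 - c 1 1 : ℝ) : ℂ) - ((c 0 1 + c 1 0 : ℝ) : ℂ) * I := by
  simp [pauliInteraction_apply, Fin.sum_univ_three, σx, σy, σz, mul_assoc]
  ring

theorem pauliInteraction_apply_zero_one_one_zero (c : Fin 3 → Fin 3 → ℝ) :
    pauliInteraction c (0, 1) (1, 0) =
      ((c 0 0 + c 1 1 : ℝ) : ℂ) - ((c 1 0 - c 0 1 : ℝ) : ℂ) * I := by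
  simp [pauliInteraction_apply, Fin.sum_univ_three, σx, σy, σz, mul_assoc]
  ring

def IsHeatTransferCoupling (ωA ωB : ℝ) (c : Fin 3 → Fin 3 → ℝ) : Prop :=
  c 0 2 = 0 ∧ c 1 2 = 0 ∧ c 2 0 = 0 ∧ c 2 1 = 0 ∧
    ((ωA ≠ ωB ∧ c 0 0 = 0 ∧ c 0 1 = 0 ∧ c 1 0 = 0 ∧ c 1 1 = 0) ∨
     (ωA = ωB ∧ c 0 0 = c 1 1 ∧ c 0 1 = -(c 1 0)))

theorem IsHeatTransferCoupling.pauliInteraction_apply_eq_zero {ωA ωB : ℝ}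
    {c : Fin 3 → Fin 3 → ℝ} (hc : IsHeatTransferCoupling ωA ωB c) :
    ∀ p q, bareEnergy ωA ωB p ≠ bareEnergy ωA ωB q → pauliInteraction c p q = 0 := by
  obtain ⟨c02, c12, c20, c21, ⟨-, c00, c01, c10, c11⟩ | ⟨rfl, cxx, cxy⟩⟩ := hc
  all_goals
    rintro ⟨i, j⟩ ⟨k, l⟩ hE
    rw [pauliInteraction_apply]
    fin_cases i <;> fin_cases j <;> fin_cases k <;> fin_cases l <;>
      simp_all [bareEnergy, Fin.sum_univ_three, σx, σy, σz, mul_assoc]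

theorem isHeatTransferCoupling_of_pauliInteraction_apply_eq_zero {ωA ωB : ℝ} (hωA : 0 < ωA)
    (hωB : 0 < ωB) {c : Fin 3 → Fin 3 → ℝ}
    (h : ∀ p q, bareEnergy ωA ωB p ≠ bareEnergy ωA ωB q → pauliInteraction c p q = 0) :
    IsHeatTransferCoupling ωA ωB c := by
  have hB := h (0, 0) (0, 1) (by norm_num [bareEnergy]; linarith)
  have hA := h (0, 0) (1, 0) (by norm_num [bareEnergy]; linarith)
  have hAB := h (0, 0) (1, 1) (by norm_num [bareEnergy]; linarith)
  rw [pauliInteraction_apply_zero_zero_zero_one, ofReal_sub_ofReal_mul_I_eq_zero] at hB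
  rw [pauliInteraction_apply_zero_zero_one_zero, ofReal_sub_ofReal_mul_I_eq_zero] at hA
  rw [pauliInteraction_apply_zero_zero_one_one, ofReal_sub_ofReal_mul_I_eq_zero] at hAB
  refine ⟨hA.1, hA.2, hB.1, hB.2, ?_⟩
  by_cases hω : ωA = ωB
  · exact Or.inr ⟨hω, by linarith, by linarith⟩
  have hflip := h (0, 1) (1, 0) (by norm_num [bareEnergy]; contrapose! hω; linarith)
  rw [pauliInteraction_apply_zero_one_one_zero, ofReal_sub_ofReal_mul_I_eq_zero] at hflip
  exact Or.inl ⟨hω, by linarith, by linarith, by linarith, by linarith⟩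

/-- Characterization of two-body heat-transfer interactions for a qubit
pair: with `H₀ = -(ω_A/2)σᶻ⊗I - (ω_B/2)I⊗σᶻ` (`ω_A, ω_B > 0`) and
`H_I = Σ_{a,b} c^{ab} σᵃ⊗σᵇ` (real coefficients, `a, b ∈ {x,y,z}` indexed by `0,1,2`),
`[H₀, H_I] = 0` iff `c^{xz} = c^{yz} = c^{zx} = c^{zy} = 0` and either
(i) `ω_A ≠ ω_B` and `c^{xx} = c^{xy} = c^{yx} = c^{yy} = 0`, or
(ii) `ω_A = ω_B` and `c^{xx} = c^{yy}`, `c^{xy} = -c^{yx}` (`c^{zz}` unconstrained). -/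
theorem two_body_heat_transfer_characterization
    (ωA ωB : ℝ) (hωA : 0 < ωA) (hωB : 0 < ωB)
    (c : Fin 3 → Fin 3 → ℝ)
    (P : Fin 3 → Matrix (Fin 2) (Fin 2) ℂ) (hP : P = ![σx, σy, σz])
    (H₀ HI : Matrix (Fin 2 × Fin 2) (Fin 2 × Fin 2) ℂ)
    (hH₀ : H₀ = ((-(ωA/2) : ℝ) : ℂ) • (σz ⊗ₖ (1 : Matrix (Fin 2) (Fin 2) ℂ))
        + ((-(ωB/2) : ℝ) : ℂ) • ((1 : Matrix (Fin 2) (Fin 2) ℂ) ⊗ₖ σz))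
    (hHI : HI = ∑ a, ∑ b, ((c a b : ℝ) : ℂ) • (P a ⊗ₖ P b)) :
    ⁅H₀, HI⁆ = 0 ↔
      (c 0 2 = 0 ∧ c 1 2 = 0 ∧ c 2 0 = 0 ∧ c 2 1 = 0 ∧
        ((ωA ≠ ωB ∧ c 0 0 = 0 ∧ c 0 1 = 0 ∧ c 1 0 = 0 ∧ c 1 1 = 0) ∨
         (ωA = ωB ∧ c 0 0 = c 1 1 ∧ c 0 1 = -(c 1 0)))) := by
  subst hP hH₀ hHI
  rw [bareHamiltonian_eq_diagonal, lie_diagonal_eq_zero_iff]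
  simp only [ne_eq, Complex.ofReal_inj]
  exact ⟨isHeatTransferCoupling_of_pauliInteraction_apply_eq_zero hωA hωB,
    IsHeatTransferCoupling.pauliInteraction_apply_eq_zero⟩
end
end

section
/- Diagonal-pair sign lemma. Let qubits A_k and B_l have equal frequency ω > 0 and pair interaction H_{kl} = c σ^−_{A_k}σ^+_{B_l} + c̄ σ^+_{A_k}σ^−_{B_l}, and let H_{B0} contain the term −(ω/2)σ^z_{B_l}. Let ρ be a density matrix whose single-qubit reduced states are Gibbs: ρ_{A_k} = e^{β_{A_k} ω σ^z/2}/(2 cosh(β_{A_k}ω/2)) and ρ_{B_l} = e^{β_{B_l} ω σ^z/2}/(2 cosh(β_{B_l}ω/2)). Then the diagonal second-derivative contribution satisfies −tr( ρ [H_{kl}, [H_{kl}, H_{B0}]] ) = |c|² ω ( tanh(β_{B_l}ω/2) − tanh(β_{A_k}ω/2) ); in particular (β_{B_l} − β_{A_k}) · ( −tr( ρ [H_{kl}, [H_{kl}, H_{B0}]] ) ) ≥ 0, with equality only if β_{A_k} = β_{B_l}. -/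
open Matrix Kronecker Complex
open scoped ComplexOrder

noncomputable section

/-! The coupling `H = c σ⁻_u σ⁺_v + c̄ σ⁺_u σ⁻_v` only moves an excitation between `u` and `v`.
With `X = σ⁻_u σ⁺_v` and `Y = σ⁺_u σ⁻_v` one has `⁅X, σᶻ_v⁆ = -2X`, `⁅Y, σᶻ_v⁆ = 2Y` and
`⁅X, Y⁆ = (σᶻ_v - σᶻ_u)/2`, so `⁅H, ⁅H, σᶻ_v⁆⁆ = 2|c|²(σᶻ_v - σᶻ_u)`, while `σᶻ` on any other
qubit commutes with `H`. The double commutator with a `σᶻ`-field is therefore a combination of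
`σᶻ_u` and `σᶻ_v`, whose expectations only see the single-qubit marginals of `ρ`; for the Gibbs
marginals these are `tanh (βω/2)`, and the sign statement is the strict monotonicity of `tanh`. -/

lemma lie_σp_σz : ⁅σp, σz⁆ = (-2 : ℂ) • σp := by
  ext i j; fin_cases i <;> fin_cases j <;> norm_num [Ring.lie_def, σp, σz]

lemma lie_σm_σz : ⁅σm, σz⁆ = (2 : ℂ) • σm := by
  ext i j; fin_cases i <;> fin_cases j <;> norm_num [Ring.lie_def, σm, σz]

lemma σm_mul_σp : σm * σp = (2 : ℂ)⁻¹ • (1 - σz) := by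
  ext i j; fin_cases i <;> fin_cases j <;> norm_num [σm, σp, σz, one_apply]

lemma σp_mul_σm : σp * σm = (2 : ℂ)⁻¹ • (1 + σz) := by
  ext i j; fin_cases i <;> fin_cases j <;> norm_num [σm, σp, σz, one_apply]

lemma trace_gibbsQubit_mul_σz (β ω : ℝ) :
    (gibbsQubit β ω * σz).trace = Real.tanh (β * ω / 2) := by
  have hcosh : (2 * Real.cosh (β * ω / 2) : ℂ) ≠ 0 := by
    exact_mod_cast (by positivity : (0 : ℝ) < 2 * Real.cosh (β * ω / 2)).ne'
  rw [gibbsQubit, σz, smul_mul, trace_smul, mul_fin_two, trace_fin_two_of,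
    Real.tanh_eq_sinh_div_cosh, Real.sinh_eq, neg_div]
  push_cast
  field_simp
  ring

section
variable {ι : Type*} [Fintype ι] [DecidableEq ι]

lemma tpow_mul_s13 (M N : ι → Matrix (Fin 2) (Fin 2) ℂ) :
    tpow M * tpow N = tpow (M * N) := by
  ext f g
  simp only [tpow, mul_apply, of_apply, Fintype.prod_sum, Pi.mul_apply, Finset.prod_mul_distrib]

lemma opAt_apply (u : ι) (M : Matrix (Fin 2) (Fin 2) ℂ) (f g : ι → Fin 2) :
    opAt u M f g = if ∀ i ≠ u, f i = g i then M (f u) (g u) else 0 := by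
  rw [opAt, tpow, of_apply, ← Finset.mul_prod_erase _ _ (Finset.mem_univ u), if_pos rfl,
    Finset.prod_congr rfl fun i hi => by rw [if_neg (Finset.ne_of_mem_erase hi), one_apply],
    Finset.prod_boole]
  simp [Finset.mem_erase]

lemma opAt_one (u : ι) : opAt u (1 : Matrix (Fin 2) (Fin 2) ℂ) = 1 := by
  ext f g
  rw [opAt_apply, one_apply, one_apply]
  by_cases hfg : f = g
  · simp [hfg]
  · rw [if_neg hfg]
    split_ifs with hne hu
    · exact absurd (funext fun i => if hi : i = u then hi ▸ hu else hne i hi) hfg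
    all_goals rfl

lemma opAt_add (u : ι) (M N : Matrix (Fin 2) (Fin 2) ℂ) :
    opAt u (M + N) = opAt u M + opAt u N := by
  ext f g
  simp only [opAt_apply, Matrix.add_apply]
  split_ifs <;> simp

lemma opAt_smul (u : ι) (r : ℂ) (M : Matrix (Fin 2) (Fin 2) ℂ) :
    opAt u (r • M) = r • opAt u M := by
  ext f g
  simp only [opAt_apply, Matrix.smul_apply]
  split_ifs <;> simp

lemma opAt_sub (u : ι) (M N : Matrix (Fin 2) (Fin 2) ℂ) :
    opAt u (M - N) = opAt u M - opAt u N := by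
  rw [sub_eq_add_neg, opAt_add, ← neg_one_smul ℂ N, opAt_smul]; module

lemma opAt_mul_opAt (u : ι) (M N : Matrix (Fin 2) (Fin 2) ℂ) :
    opAt u M * opAt u N = opAt u (M * N) := by
  rw [opAt, opAt, opAt, tpow_mul_s13]
  congr 1
  funext i
  simp only [Pi.mul_apply]
  split_ifs <;> simp

lemma commute_opAt_opAt {u v : ι} (h : u ≠ v) (M N : Matrix (Fin 2) (Fin 2) ℂ) :
    Commute (opAt u M) (opAt v N) := by
  rw [Commute, SemiconjBy, opAt, opAt, tpow_mul_s13, tpow_mul_s13]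
  congr 1
  funext i
  simp only [Pi.mul_apply]
  split_ifs <;> simp_all

lemma trace_mul_opAt (u : ι) (ρ : Matrix (ι → Fin 2) (ι → Fin 2) ℂ)
    (M : Matrix (Fin 2) (Fin 2) ℂ) :
    (ρ * opAt u M).trace = (rdm1 u ρ * M).trace := by
  have hL : ∀ g, (ρ * opAt u M) g g = ∑ b, ρ g (Function.update g u b) * M b (g u) := by
    intro g
    have hsupp : ∀ f ∉ Finset.univ.image (Function.update g u),
        ρ g f * opAt u M f g = 0 := by
      intro f hf
      rw [opAt_apply, if_neg, mul_zero]
      intro hne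
      exact hf (Finset.mem_image.2 ⟨f u, Finset.mem_univ _,
        (Function.eq_update_iff.2 ⟨rfl, hne⟩).symm⟩)
    rw [mul_apply, ← Finset.sum_subset (Finset.subset_univ _) fun f _ hf => hsupp f hf,
      Finset.sum_image fun b _ b' _ h => Function.update_injective g u h]
    refine Finset.sum_congr rfl fun b _ => ?_
    rw [opAt_apply, if_pos fun i hi => Function.update_of_ne hi _ _, Function.update_self]
  have hR : (rdm1 u ρ * M).trace = ∑ g, ∑ b, ρ g (Function.update g u b) * M b (g u) := by
    simp only [trace, diag, mul_apply, rdm1, of_apply, Finset.sum_mul, ite_mul, zero_mul]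
    conv_rhs => rw [Finset.sum_comm]
    rw [Finset.sum_comm]
    refine Finset.sum_congr rfl fun b _ => ?_
    rw [Finset.sum_comm]
    simp
  rw [hR, trace]
  exact Finset.sum_congr rfl fun g _ => hL g

lemma trace_mul_opAt_σz_of_rdm1_eq_gibbsQubit {u : ι} {ρ : Matrix (ι → Fin 2) (ι → Fin 2) ℂ}
    {β ω : ℝ} (h : rdm1 u ρ = gibbsQubit β ω) :
    (ρ * opAt u σz).trace = Real.tanh (β * ω / 2) := by
  rw [trace_mul_opAt, h, trace_gibbsQubit_mul_σz]

-- Matrices have no global `LieRing` instance; the commutator one makes the Lie API available.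
attribute [local instance] LieRing.ofAssociativeRing

lemma opAt_mul_opAt_mul_opAt_mul_opAt {u v : ι} (h : u ≠ v)
    (A B C D : Matrix (Fin 2) (Fin 2) ℂ) :
    opAt u A * opAt v B * (opAt u C * opAt v D) = opAt u (A * C) * opAt v (B * D) := by
  rw [mul_assoc, ← mul_assoc (opAt v B), (commute_opAt_opAt h C B).symm.eq, mul_assoc,
    ← mul_assoc, opAt_mul_opAt, opAt_mul_opAt]

lemma lie_opAt_mul_opAt_opAt {u v : ι} (h : u ≠ v) (A B C : Matrix (Fin 2) (Fin 2) ℂ) :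
    ⁅opAt u A * opAt v B, opAt v C⁆ = opAt u A * opAt v ⁅B, C⁆ := by
  rw [Ring.lie_def, Ring.lie_def, opAt_sub, mul_sub, mul_assoc, opAt_mul_opAt, ← mul_assoc,
    ← (commute_opAt_opAt h A C).eq, mul_assoc, opAt_mul_opAt]

def exchangeCoupling (u v : ι) (c : ℂ) : Matrix (ι → Fin 2) (ι → Fin 2) ℂ :=
  c • (opAt u σm * opAt v σp) + (starRingEnd ℂ) c • (opAt u σp * opAt v σm)

lemma commute_exchangeCoupling_opAt {u v w : ι} (hu : u ≠ w) (hv : v ≠ w) (c : ℂ)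
    (M : Matrix (Fin 2) (Fin 2) ℂ) : Commute (exchangeCoupling u v c) (opAt w M) :=
  have hcu := commute_opAt_opAt hu
  have hcv := commute_opAt_opAt hv
  ((((hcu σm M).mul_left (hcv σp M)).smul_left c).add_left
    (((hcu σp M).mul_left (hcv σm M)).smul_left _))

lemma lie_exchangeCoupling_lie_exchangeCoupling_opAt_σz {u v : ι} (h : u ≠ v) (c : ℂ) :
    ⁅exchangeCoupling u v c, ⁅exchangeCoupling u v c, opAt v σz⁆⁆
      = ((2 * Complex.normSq c : ℝ) : ℂ) • (opAt v σz - opAt u σz) := by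
  set X := opAt u σm * opAt v σp
  set Y := opAt u σp * opAt v σm
  have hXz : ⁅X, opAt v σz⁆ = (-2 : ℂ) • X := by
    rw [lie_opAt_mul_opAt_opAt h, lie_σp_σz, opAt_smul, mul_smul_comm]
  have hYz : ⁅Y, opAt v σz⁆ = (2 : ℂ) • Y := by
    rw [lie_opAt_mul_opAt_opAt h, lie_σm_σz, opAt_smul, mul_smul_comm]
  have hXY : ⁅X, Y⁆ = (2 : ℂ)⁻¹ • (opAt v σz - opAt u σz) := by
    rw [Ring.lie_def, opAt_mul_opAt_mul_opAt_mul_opAt h, opAt_mul_opAt_mul_opAt_mul_opAt h,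
      σm_mul_σp, σp_mul_σm]
    simp only [opAt_smul, opAt_add, opAt_sub, opAt_one, smul_mul_smul_comm, ← smul_sub]
    rw [show (1 - opAt u σz) * (1 + opAt v σz) - (1 + opAt u σz) * (1 - opAt v σz)
        = (2 : ℂ) • (opAt v σz - opAt u σz) by rw [two_smul]; noncomm_ring, smul_smul]
    norm_num
  have hH : exchangeCoupling u v c = c • X + (starRingEnd ℂ) c • Y := rfl
  have hHz : ⁅exchangeCoupling u v c, opAt v σz⁆
      = (-2 * c) • X + (2 * (starRingEnd ℂ) c) • Y := by
    rw [hH, add_lie, smul_lie, smul_lie, hXz, hYz]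
    module
  calc ⁅exchangeCoupling u v c, ⁅exchangeCoupling u v c, opAt v σz⁆⁆
      = ⁅c • X + (starRingEnd ℂ) c • Y, (-2 * c) • X + (2 * (starRingEnd ℂ) c) • Y⁆ := by
        rw [hHz, hH]
    _ = (4 * ((starRingEnd ℂ) c * c)) • ⁅X, Y⁆ := by
        rw [add_lie, lie_add, lie_add, smul_lie, smul_lie, smul_lie, smul_lie, lie_smul, lie_smul,
          lie_smul, lie_smul, lie_self, lie_self, ← lie_skew Y X]
        module
    _ = _ := by
        rw [hXY, ← Complex.normSq_eq_conj_mul_self, smul_smul]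
        congr 1
        push_cast
        ring

lemma exchangeCoupling_comm {u v : ι} (h : u ≠ v) (c : ℂ) :
    exchangeCoupling u v c = exchangeCoupling v u ((starRingEnd ℂ) c) := by
  rw [exchangeCoupling, exchangeCoupling, Complex.conj_conj, add_comm,
    (commute_opAt_opAt h σp σm).eq, (commute_opAt_opAt h σm σp).eq]

lemma lie_exchangeCoupling_lie_exchangeCoupling_sum_smul_opAt_σz {u v : ι} (h : u ≠ v) (c : ℂ)
    (f : ι → ℂ) :
    ⁅exchangeCoupling u v c, ⁅exchangeCoupling u v c, ∑ w, f w • opAt w σz⁆⁆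
      = (2 * Complex.normSq c * (f v - f u)) • (opAt v σz - opAt u σz) := by
  rw [lie_sum, lie_sum, Fintype.sum_eq_add u v h]
  · rw [lie_smul, lie_smul, lie_smul, lie_smul,
      lie_exchangeCoupling_lie_exchangeCoupling_opAt_σz h, exchangeCoupling_comm h,
      lie_exchangeCoupling_lie_exchangeCoupling_opAt_σz h.symm, Complex.normSq_conj]
    push_cast
    module
  · rintro w ⟨hwu, hwv⟩
    rw [((commute_exchangeCoupling_opAt (Ne.symm hwu) (Ne.symm hwv) c σz).smul_right (f w)).lie_eq,
      lie_zero]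

end

lemma Real.tanh_strictMono : StrictMono Real.tanh := fun x y hxy => by
  have hmem : ∀ z, Real.tanh z ∈ Set.Ioo (-1) 1 := fun z => Real.tanh_bijOn.mapsTo trivial
  rwa [← Real.artanh_lt_artanh_iff (hmem x) (hmem y), Real.artanh_tanh, Real.artanh_tanh]

lemma sub_mul_tanh_sub_tanh_pos {ω a b : ℝ} (hω : 0 < ω) (hab : a ≠ b) :
    0 < (b - a) * (Real.tanh (b * ω / 2) - Real.tanh (a * ω / 2)) := by
  have hmono : StrictMono fun β => Real.tanh (β * ω / 2) :=
    Real.tanh_strictMono.comp fun x y hxy => by gcongr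
  rcases hab.lt_or_gt with h | h
  · exact mul_pos (sub_pos.2 h) (sub_pos.2 (hmono h))
  · exact mul_pos_of_neg_of_neg (sub_neg.2 h) (sub_neg.2 (hmono h))

theorem diagonal_pair_sign_lemma_general
    (NA NB : ℕ) (k : Fin NA) (l : Fin NB)
    (ω : ℝ) (hω : 0 < ω) (ωB : Fin NB → ℝ) (hωl : ωB l = ω)
    (c : ℂ) (hc : c ≠ 0)
    (βA βB : ℝ)
    (HB0 Hkl : Matrix ((Fin NA ⊕ Fin NB) → Fin 2) ((Fin NA ⊕ Fin NB) → Fin 2) ℂ)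
    (hHB0 : HB0 = (-(1/2) : ℂ) • ∑ l', (ωB l' : ℂ) • opAt (Sum.inr l') σz)
    (hHkl : Hkl = c • (opAt (Sum.inl k) σm * opAt (Sum.inr l) σp)
        + (starRingEnd ℂ) c • (opAt (Sum.inl k) σp * opAt (Sum.inr l) σm))
    (ρ : Matrix ((Fin NA ⊕ Fin NB) → Fin 2) ((Fin NA ⊕ Fin NB) → Fin 2) ℂ)
    (hA : rdm1 (Sum.inl k) ρ = gibbsQubit βA ω)
    (hB : rdm1 (Sum.inr l) ρ = gibbsQubit βB ω) :
    -((ρ * ⁅Hkl, ⁅Hkl, HB0⁆⁆).trace)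
        = ((Complex.normSq c * ω * (Real.tanh (βB * ω / 2) - Real.tanh (βA * ω / 2)) : ℝ) : ℂ) ∧
    0 ≤ (βB - βA) * (-((ρ * ⁅Hkl, ⁅Hkl, HB0⁆⁆).trace)).re ∧
    ((βB - βA) * (-((ρ * ⁅Hkl, ⁅Hkl, HB0⁆⁆).trace)).re = 0 → βA = βB) := by
  have hfield : HB0 = ∑ w, Sum.elim (fun _ => 0) (fun l' => -(ωB l' : ℂ) / 2) w • opAt w σz := by
    simp only [hHB0, Fintype.sum_sum_type, Sum.elim_inl, zero_smul,
      Finset.sum_const_zero, zero_add, Sum.elim_inr, Finset.smul_sum, smul_smul]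
    ring_nf
  have htrace : -((ρ * ⁅Hkl, ⁅Hkl, HB0⁆⁆).trace)
      = ((Complex.normSq c * ω * (Real.tanh (βB * ω / 2) - Real.tanh (βA * ω / 2)) : ℝ) : ℂ) := by
    rw [hfield, hHkl, ← exchangeCoupling,
      lie_exchangeCoupling_lie_exchangeCoupling_sum_smul_opAt_σz Sum.inl_ne_inr, mul_smul_comm,
      trace_smul, mul_sub ρ, trace_sub, trace_mul_opAt_σz_of_rdm1_eq_gibbsQubit hA,
      trace_mul_opAt_σz_of_rdm1_eq_gibbsQubit hB]
    simp only [Sum.elim_inl, Sum.elim_inr, hωl, smul_eq_mul]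
    push_cast
    ring
  have hK : 0 < Complex.normSq c * ω := mul_pos (Complex.normSq_pos.2 hc) hω
  rw [htrace, Complex.ofReal_re, mul_left_comm]
  refine ⟨rfl, ?_, fun h => ?_⟩
  · rcases eq_or_ne βA βB with rfl | hne
    · simp
    · exact (mul_pos hK (sub_mul_tanh_sub_tanh_pos hω hne)).le
  · by_contra hne
    exact (mul_pos hK (sub_mul_tanh_sub_tanh_pos hω hne)).ne' h

/-- **diagonal-pair sign lemma.** Let qubits `A_k` and `B_l` (in a
multi-qubit system indexed by `Fin NA ⊕ Fin NB`) have equal frequency `ω > 0` and pair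
interaction `H_{kl} = c σ⁻_{A_k}σ⁺_{B_l} + c̄ σ⁺_{A_k}σ⁻_{B_l}` (`c ≠ 0`), with
`H_{B0} = -(1/2)Σ_l ω_{B_l}σᶻ_{B_l}` containing the term `-(ω/2)σᶻ_{B_l}`. If the
single-qubit reduced states of a density matrix `ρ` on `A_k` and `B_l` are Gibbs at inverse
temperatures `β_{A_k}`, `β_{B_l}`, then
`-tr(ρ[H_{kl},[H_{kl},H_{B0}]]) = |c|²ω(tanh(β_{B_l}ω/2) - tanh(β_{A_k}ω/2))`;
in particular `(β_{B_l} - β_{A_k})·(-tr(ρ[H_{kl},[H_{kl},H_{B0}]])) ≥ 0`, with equality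
only if `β_{A_k} = β_{B_l}`. -/
theorem diagonal_pair_sign_lemma
    (NA NB : ℕ) (k : Fin NA) (l : Fin NB)
    (ω : ℝ) (hω : 0 < ω) (ωB : Fin NB → ℝ) (hωl : ωB l = ω)
    (c : ℂ) (hc : c ≠ 0)
    (βA βB : ℝ)
    (HB0 Hkl : Matrix ((Fin NA ⊕ Fin NB) → Fin 2) ((Fin NA ⊕ Fin NB) → Fin 2) ℂ)
    (hHB0 : HB0 = (-(1/2) : ℂ) • ∑ l', (ωB l' : ℂ) • opAt (Sum.inr l') σz)
    (hHkl : Hkl = c • (opAt (Sum.inl k) σm * opAt (Sum.inr l) σp)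
        + (starRingEnd ℂ) c • (opAt (Sum.inl k) σp * opAt (Sum.inr l) σm))
    (ρ : Matrix ((Fin NA ⊕ Fin NB) → Fin 2) ((Fin NA ⊕ Fin NB) → Fin 2) ℂ)
    (hρ : ρ.PosSemidef) (hρtr : ρ.trace = 1)
    (hA : rdm1 (Sum.inl k) ρ = gibbsQubit βA ω)
    (hB : rdm1 (Sum.inr l) ρ = gibbsQubit βB ω) :
    -((ρ * ⁅Hkl, ⁅Hkl, HB0⁆⁆).trace)
        = ((Complex.normSq c * ω * (Real.tanh (βB * ω / 2) - Real.tanh (βA * ω / 2)) : ℝ) : ℂ) ∧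
    0 ≤ (βB - βA) * (-((ρ * ⁅Hkl, ⁅Hkl, HB0⁆⁆).trace)).re ∧
    ((βB - βA) * (-((ρ * ⁅Hkl, ⁅Hkl, HB0⁆⁆).trace)).re = 0 → βA = βB) :=
  diagonal_pair_sign_lemma_general NA NB k l ω hω ωB hωl c hc βA βB HB0 Hkl hHB0 hHkl ρ hA hB
end
end
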